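/- (Concavity nonexistence lemma.) Let τ₀ ∈ ℝ, p > 0, and let g : [τ₀,∞) → [0,∞) be continuous with ∫_{τ₀}^{∞} g(τ)dτ = ∞. Then there is no twice continuously differentiable function Ψ : [τ₀,∞) → (0,∞) satisfying Ψ″(τ) ≤ −g(τ)·Ψ(τ)^{p} for every τ ≥ τ₀. -/

import Mathlib

open MeasureTheory Filter

/-!
Since `g ≥ 0`, `Ψ'' ≤ 0`, so `Ψ'` is nonincreasing. A negative value `Ψ'(a) < 0` would force
`Ψ(t) ≤ Ψ(a) + Ψ'(a)(t - a) → -∞`, contradicting `Ψ > 0`; hence `Ψ' ≥ 0`, and `Ψ ≥ c := Ψ(τ₀) > 0`.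
Then `Ψ'' ≤ -c^p g`, and integrating gives `Ψ'(R) ≤ Ψ'(τ₀) - c^p ∫_{τ₀}^R g → -∞`, contradicting `Ψ' ≥ 0`.
-/

open Set

section HalfLine

variable {f f' : ℝ → ℝ} {a : ℝ}

lemma antitoneOn_Ici_of_hasDerivAt_nonpos (hf : ∀ x, a ≤ x → HasDerivAt f (f' x) x)
    (hf' : ∀ x, a ≤ x → f' x ≤ 0) : AntitoneOn f (Ici a) := by
  refine antitoneOn_of_hasDerivWithinAt_nonpos (f' := f') (convex_Ici a)
    (fun x hx => (hf x hx).continuousAt.continuousWithinAt) (fun x hx => ?_) (fun x hx => ?_)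
  all_goals rw [interior_Ici] at hx
  · exact (hf x (le_of_lt hx)).hasDerivWithinAt
  · exact hf' x (le_of_lt hx)

lemma monotoneOn_Ici_of_hasDerivAt_nonneg (hf : ∀ x, a ≤ x → HasDerivAt f (f' x) x)
    (hf' : ∀ x, a ≤ x → 0 ≤ f' x) : MonotoneOn f (Ici a) := by
  have := antitoneOn_Ici_of_hasDerivAt_nonpos (fun x hx => (hf x hx).neg)
    (fun x hx => neg_nonpos.mpr (hf' x hx))
  exact fun x hx y hy hxy => neg_le_neg_iff.mp (this hx hy hxy)

lemma nonneg_of_antitoneOn_deriv_of_bddBelow {m : ℝ} (hf : ∀ x, a ≤ x → HasDerivAt f (f' x) x)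
    (hanti : AntitoneOn f' (Ici a)) (hlow : ∀ x, a ≤ x → m ≤ f x) (x : ℝ) (hx : a ≤ x) :
    0 ≤ f' x := by
  by_contra! hneg
  have hbelow_tangent : AntitoneOn (fun t => f t - f' x * t) (Ici x) :=
    antitoneOn_Ici_of_hasDerivAt_nonpos
      (fun t ht => (hf t (hx.trans ht)).sub ((hasDerivAt_id t).const_mul (f' x)))
      (fun t ht => by
        have := hanti hx (show a ≤ t from hx.trans ht) ht
        simp only [mul_one]
        linarith)
  set t := x + (f x - m + 1) / -f' x
  have hxt : x ≤ t := le_add_of_nonneg_right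
    (div_nonneg (by linarith [hlow x hx]) (by linarith))
  have hft := hbelow_tangent self_mem_Ici hxt hxt
  have hstep : f' x * (t - x) = -(f x - m + 1) := by
    simp only [t, add_sub_cancel_left]
    field_simp [hneg.ne]
  linarith [hlow t (hx.trans hxt)]

end HalfLine

lemma not_tendsto_integral_of_hasDerivAt_le_neg {u u' φ : ℝ → ℝ} {a m : ℝ}
    (hu : ∀ x, a ≤ x → HasDerivAt u (u' x) x) (hle : ∀ x, a ≤ x → u' x ≤ -φ x)
    (hlow : ∀ x, a ≤ x → m ≤ u x) :
    ¬ Tendsto (fun R => ∫ t in a..R, φ t) atTop atTop := by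
  intro hφ
  obtain ⟨R, haR, hR⟩ :=
    ((eventually_ge_atTop a).and (hφ.eventually_gt_atTop (max (u a - m) 0))).exists
  -- the integral is nonzero, so it is not the junk value of a non-integrable function
  have hint : IntervalIntegrable φ volume a R :=
    intervalIntegral.intervalIntegrable_of_integral_ne_zero (by linarith [le_max_right (u a - m) 0])
  have hftc : ∫ t in a..R, φ t ≤ -u R - -u a :=
    intervalIntegral.integral_le_sub_of_hasDeriv_right_of_le haR
      (fun x hx => (hu x hx.1).continuousAt.neg.continuousWithinAt)
      (fun x hx => (hu x (le_of_lt hx.1)).neg.hasDerivWithinAt)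
      ((intervalIntegrable_iff_integrableOn_Icc_of_le haR).mp hint)
      (fun x hx => le_neg_of_le_neg (hle x (le_of_lt hx.1)))
  linarith [hlow R haR, le_max_left (u a - m) 0]

theorem concavity_nonexistence_general
    (τ₀ p : ℝ) (hp : 0 < p) (g : ℝ → ℝ)
    (hgnn : ∀ τ : ℝ, τ₀ ≤ τ → 0 ≤ g τ)
    (hgdiv : Tendsto (fun R : ℝ => ∫ τ in τ₀..R, g τ) atTop atTop) :
    ¬ ∃ Ψ Ψ' Ψ'' : ℝ → ℝ,
        (∀ τ : ℝ, τ₀ ≤ τ → HasDerivAt Ψ (Ψ' τ) τ) ∧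
        (∀ τ : ℝ, τ₀ ≤ τ → HasDerivAt Ψ' (Ψ'' τ) τ) ∧
        ContinuousOn Ψ'' (Set.Ici τ₀) ∧
        (∀ τ : ℝ, τ₀ ≤ τ → 0 < Ψ τ) ∧
        (∀ τ : ℝ, τ₀ ≤ τ → Ψ'' τ ≤ -g τ * Ψ τ ^ p) := by
  rintro ⟨Ψ, Ψ', Ψ'', hΨ, hΨ', -, hpos, hineq⟩
  have hΨ''_nonpos : ∀ τ, τ₀ ≤ τ → Ψ'' τ ≤ 0 := fun τ hτ =>
    (hineq τ hτ).trans (mul_nonpos_of_nonpos_of_nonneg (neg_nonpos.mpr (hgnn τ hτ))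
      (Real.rpow_nonneg (hpos τ hτ).le p))
  have hΨ'_nonneg : ∀ τ, τ₀ ≤ τ → 0 ≤ Ψ' τ :=
    nonneg_of_antitoneOn_deriv_of_bddBelow hΨ
      (antitoneOn_Ici_of_hasDerivAt_nonpos hΨ' hΨ''_nonpos) (fun τ hτ => (hpos τ hτ).le)
  have hΨ_ge : ∀ τ, τ₀ ≤ τ → Ψ τ₀ ≤ Ψ τ := fun τ hτ =>
    monotoneOn_Ici_of_hasDerivAt_nonneg hΨ hΨ'_nonneg self_mem_Ici hτ hτ
  have hΨ''_le : ∀ τ, τ₀ ≤ τ → Ψ'' τ ≤ -(Ψ τ₀ ^ p * g τ) := fun τ hτ => by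
    have := Real.rpow_le_rpow (hpos τ₀ le_rfl).le (hΨ_ge τ hτ) hp.le
    nlinarith [hineq τ hτ, hgnn τ hτ]
  refine not_tendsto_integral_of_hasDerivAt_le_neg hΨ' hΨ''_le hΨ'_nonneg ?_
  simpa only [intervalIntegral.integral_const_mul] using
    hgdiv.const_mul_atTop (Real.rpow_pos_of_pos (hpos τ₀ le_rfl) p)

/-- Concavity nonexistence lemma: if `g ≥ 0` is continuous on `[τ₀,∞)` with
`∫_{τ₀}^∞ g = ∞`, then there is no positive `C²` function `Ψ` on `[τ₀,∞)` with
`Ψ'' ≤ −g Ψ^p` (for any `p > 0`). -/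
theorem concavity_nonexistence
    (τ₀ p : ℝ) (hp : 0 < p) (g : ℝ → ℝ)
    (hgcont : ContinuousOn g (Set.Ici τ₀))
    (hgnn : ∀ τ : ℝ, τ₀ ≤ τ → 0 ≤ g τ)
    (hgdiv : Tendsto (fun R : ℝ => ∫ τ in τ₀..R, g τ) atTop atTop) :
    ¬ ∃ Ψ Ψ' Ψ'' : ℝ → ℝ,
        (∀ τ : ℝ, τ₀ ≤ τ → HasDerivAt Ψ (Ψ' τ) τ) ∧
        (∀ τ : ℝ, τ₀ ≤ τ → HasDerivAt Ψ' (Ψ'' τ) τ) ∧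
        ContinuousOn Ψ'' (Set.Ici τ₀) ∧
        (∀ τ : ℝ, τ₀ ≤ τ → 0 < Ψ τ) ∧
        (∀ τ : ℝ, τ₀ ≤ τ → Ψ'' τ ≤ -g τ * Ψ τ ^ p) :=
  concavity_nonexistence_general τ₀ p hp g hgnn hgdiv
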